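/- arXiv:1603.04981 — 2 statements merged into one kernel-verified Lean document; each statement's English description precedes it below -/
import Mathlib

section
/- For any two Pareto frontiers U and V in 𝓕, d(U, V) = max(e(U, V), e(V, U)). -/
/-- The upset of `A` within `[0,1]^K`: points of `[0,1]^K` dominating some point of `A`. -/
def upset (K : ℕ) (A : Set (Fin K → ℝ)) : Set (Fin K → ℝ) :=
  {x | x ∈ Set.Icc (0 : Fin K → ℝ) 1 ∧ ∃ y ∈ A, y ≤ x}

/-- Membership in the space `𝓕`: a nonempty Pareto frontier in `[0,1]^K`
(no element dominates a different element) whose upset is closed and convex. -/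
def memF (K : ℕ) (V : Set (Fin K → ℝ)) : Prop :=
  V.Nonempty ∧ V ⊆ Set.Icc (0 : Fin K → ℝ) 1 ∧
    (∀ u ∈ V, ∀ v ∈ V, u ≤ v → u = v) ∧
    IsClosed (upset K V) ∧ Convex ℝ (upset K V)

/-- The metric `d` on `𝓕`: Hausdorff distance (for the ℓ∞ norm) between upsets. -/
noncomputable def dF (K : ℕ) (U V : Set (Fin K → ℝ)) : ℝ :=
  Metric.hausdorffDist (upset K U) (upset K V)

/-- `e(U,V)`: the least `ε ≥ 0` such that every `u ∈ U` `ε`-dominates some `v ∈ V`. -/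
noncomputable def eDom (K : ℕ) (U V : Set (Fin K → ℝ)) : ℝ :=
  sInf {ε : ℝ | 0 ≤ ε ∧ ∀ u ∈ U, ∃ v ∈ V, ∀ i, v i ≤ u i + ε}

lemma upset_subset_Icc (K : ℕ) (A : Set (Fin K → ℝ)) :
    upset K A ⊆ Set.Icc (0 : Fin K → ℝ) 1 := fun _ hx => hx.1

lemma subset_upset {K : ℕ} {A : Set (Fin K → ℝ)} (hA : A ⊆ Set.Icc (0 : Fin K → ℝ) 1) :
    A ⊆ upset K A := fun a ha => ⟨hA ha, a, ha, le_refl a⟩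

lemma upset_nonempty {K : ℕ} {A : Set (Fin K → ℝ)} (hA : memF K A) :
    (upset K A).Nonempty := hA.1.mono (subset_upset hA.2.1)

lemma upset_compact {K : ℕ} {A : Set (Fin K → ℝ)} (hA : memF K A) :
    IsCompact (upset K A) :=
  (isCompact_Icc).of_isClosed_subset hA.2.2.2.1 (upset_subset_Icc K A)

/-- The defining set of `eDom` is nonempty (contains 1). -/
lemma eDom_set_nonempty {K : ℕ} {U V : Set (Fin K → ℝ)} (hU : memF K U) (hV : memF K V) :
    (1 : ℝ) ∈ {ε : ℝ | 0 ≤ ε ∧ ∀ u ∈ U, ∃ v ∈ V, ∀ i, v i ≤ u i + ε} := by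
  refine ⟨zero_le_one, fun u hu => ?_⟩
  obtain ⟨v, hv⟩ := hV.1
  refine ⟨v, hv, fun i => ?_⟩
  have h1 : v i ≤ 1 := (hV.2.1 hv).2 i
  have h2 : 0 ≤ u i := (hU.2.1 hu).1 i
  linarith

lemma eDom_set_bddBelow {K : ℕ} (U V : Set (Fin K → ℝ)) :
    BddBelow {ε : ℝ | 0 ≤ ε ∧ ∀ u ∈ U, ∃ v ∈ V, ∀ i, v i ≤ u i + ε} :=
  ⟨0, fun _ hx => hx.1⟩

/-- Upward closedness of the defining set. -/
lemma eDom_set_upward {K : ℕ} {U V : Set (Fin K → ℝ)} {ε ε' : ℝ}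
    (h : ε' ∈ {ε : ℝ | 0 ≤ ε ∧ ∀ u ∈ U, ∃ v ∈ V, ∀ i, v i ≤ u i + ε}) (hle : ε' ≤ ε) :
    ε ∈ {ε : ℝ | 0 ≤ ε ∧ ∀ u ∈ U, ∃ v ∈ V, ∀ i, v i ≤ u i + ε} := by
  refine ⟨le_trans h.1 hle, fun u hu => ?_⟩
  obtain ⟨v, hv, hvi⟩ := h.2 u hu
  exact ⟨v, hv, fun i => le_trans (hvi i) (by linarith)⟩

/-- If `ε` is in the defining set, then every point of `upset U` is within distance `ε`
of a point of `upset V`. -/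
lemma exists_near {K : ℕ} {U V : Set (Fin K → ℝ)} {ε : ℝ} (hV : V ⊆ Set.Icc (0 : Fin K → ℝ) 1)
    (hε : ε ∈ {ε : ℝ | 0 ≤ ε ∧ ∀ u ∈ U, ∃ v ∈ V, ∀ i, v i ≤ u i + ε}) :
    ∀ x ∈ upset K U, ∃ y ∈ upset K V, dist x y ≤ ε := by
  rintro x ⟨hxI, u, hu, hux⟩
  obtain ⟨hε0, h⟩ := hε
  obtain ⟨v, hv, hvi⟩ := h u hu
  refine ⟨fun i => max (v i) (x i - ε), ⟨⟨fun i => ?_, fun i => ?_⟩, v, hv, fun i => le_max_left _ _⟩, ?_⟩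
  · exact le_trans ((hV hv).1 i) (le_max_left _ _)
  · refine max_le ((hV hv).2 i) ?_
    have := hxI.2 i
    simp only [Pi.one_apply] at this ⊢
    linarith
  · rw [dist_pi_le_iff hε0]
    intro i
    rw [Real.dist_eq, abs_sub_le_iff]
    have h1 : x i - ε ≤ max (v i) (x i - ε) := le_max_right _ _
    have h2 : max (v i) (x i - ε) ≤ x i + ε := by
      refine max_le (le_trans (hvi i) ?_) (by linarith)
      have := hux i; linarith
    constructor <;> linarith

/-- for `U, V ∈ 𝓕`, `d(U,V) = max(e(U,V), e(V,U))`. -/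
theorem dF_eq_max_eDom {K : ℕ} (U V : Set (Fin K → ℝ))
    (hU : memF K U) (hV : memF K V) :
    dF K U V = max (eDom K U V) (eDom K V U) := by
  rw [dF]
  have hAne := upset_nonempty hU
  have hBne := upset_nonempty hV
  have hAc := upset_compact hU
  have hBc := upset_compact hV
  have hne : EMetric.hausdorffEdist (upset K U) (upset K V) ≠ ⊤ :=
    Metric.hausdorffEdist_ne_top_of_nonempty_of_bounded hAne hBne hAc.isBounded hBc.isBounded
  -- lower bound on each eDom
  have key : ∀ (U' V' : Set (Fin K → ℝ)), memF K U' → memF K V' →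
      eDom K U' V' ≤ Metric.hausdorffDist (upset K U') (upset K V') := by
    intro U' V' hU' hV'
    have hne' : EMetric.hausdorffEdist (upset K U') (upset K V') ≠ ⊤ :=
      Metric.hausdorffEdist_ne_top_of_nonempty_of_bounded (upset_nonempty hU')
        (upset_nonempty hV') (upset_compact hU').isBounded (upset_compact hV').isBounded
    refine csInf_le (eDom_set_bddBelow _ _) ⟨Metric.hausdorffDist_nonneg, fun u hu => ?_⟩
    have hum : u ∈ upset K U' := subset_upset hU'.2.1 hu
    have hinf : Metric.infDist u (upset K V') ≤ Metric.hausdorffDist (upset K U') (upset K V') :=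
      Metric.infDist_le_hausdorffDist_of_mem hum hne'
    obtain ⟨y, hy, hyd⟩ := (upset_compact hV').exists_infDist_eq_dist (upset_nonempty hV') u
    obtain ⟨-, v, hv, hvy⟩ := hy
    refine ⟨v, hv, fun i => ?_⟩
    have h1 : dist (u i) (y i) ≤ dist u y := dist_le_pi_dist u y i
    have h2 : y i - u i ≤ dist (u i) (y i) := by
      rw [Real.dist_eq, abs_sub_comm]; exact le_abs_self _
    have := hvy i
    rw [← hyd] at h1
    linarith
  refine le_antisymm ?_ (max_le (key U V hU hV) (by
    have := key V U hV hU
    rw [Metric.hausdorffDist_comm] at this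
    exact this))
  -- upper bound
  refine le_of_forall_gt_imp_ge_of_dense fun ε hε => ?_
  have h1 : eDom K U V < ε := lt_of_le_of_lt (le_max_left _ _) hε
  have h2 : eDom K V U < ε := lt_of_le_of_lt (le_max_right _ _) hε
  rw [eDom, csInf_lt_iff (eDom_set_bddBelow _ _)
    ⟨1, eDom_set_nonempty hU hV⟩] at h1
  rw [eDom, csInf_lt_iff (eDom_set_bddBelow _ _)
    ⟨1, eDom_set_nonempty hV hU⟩] at h2
  obtain ⟨e1, he1, he1ε⟩ := h1
  obtain ⟨e2, he2, he2ε⟩ := h2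
  have hε1 := eDom_set_upward he1 he1ε.le
  have hε2 := eDom_set_upward he2 he2ε.le
  exact Metric.hausdorffDist_le_of_mem_dist hε1.1
    (exists_near hV.2.1 hε1) (exists_near hU.2.1 hε2)
end

section
/- For every V ∈ 𝓕 and every positive integer N: e(Γ_N(V), V) = 0 and e(V, Γ_N(V)) ≤ 1/N; consequently d(V, Γ_N(V)) ≤ 1/N. -/
/-- The lower Pareto frontier `Λ(S)`: the minimal elements of `S` in the
coordinatewise order, i.e. the elements of `S` dominating no other element of `S`. -/
def pareto (K : ℕ) (S : Set (Fin K → ℝ)) : Set (Fin K → ℝ) :=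
  {x ∈ S | ∀ y ∈ S, y ≤ x → y = x}

/-- The parameter set `𝒫`: vectors in `[0,1]^K` with at least one zero coordinate. -/
def paramSet (K : ℕ) : Set (Fin K → ℝ) :=
  {p | (∀ i, p i ∈ Set.Icc (0:ℝ) 1) ∧ ∃ k, p k = 0}

/-- `F(p,V) = t*·1 + p`, where `t*` is the smallest `t` such that `t·1 + p` lies in
the upset of `V` taken in `[0,2]^K`. -/
noncomputable def Fparam (K : ℕ) (p : Fin K → ℝ) (V : Set (Fin K → ℝ)) : Fin K → ℝ :=
  fun i =>
    sInf {t : ℝ | (∀ j, 0 ≤ t + p j ∧ t + p j ≤ 2) ∧ ∃ y ∈ V, ∀ j, y j ≤ t + p j} + p i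

/-- The grid `𝒫_N ⊆ 𝒫`: coordinates restricted to `{0, 1/N, …, 1}`. -/
def paramSetN (K N : ℕ) : Set (Fin K → ℝ) :=
  {p | p ∈ paramSet K ∧ ∀ i, ∃ j : ℕ, j ≤ N ∧ p i = (j : ℝ) / N}

/-- The approximation operator `Γ_N`: Pareto frontier of the closed convex hull of
`{F(p,V) : p ∈ 𝒫_N}`. -/
noncomputable def gammaN (K N : ℕ) (V : Set (Fin K → ℝ)) : Set (Fin K → ℝ) :=
  pareto K (closure (convexHull ℝ ((fun p => Fparam K p V) '' paramSetN K N)))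

/-! Every `F(p, V)` dominates a point of `V`, and the points dominating `V` form a convex set,
so the whole convex hull, and with it `Γ_N(V)`, lies above `V`. Conversely, round `v ∈ V` up
to the grid point `r / N` with `r = ⌈N v⌉`; writing `r / N = t·1 + q` with `t = min r / N`
puts `q` in `𝒫_N` with `F(q, V) ≤ r / N ≤ min (v + 1/N) 1`, and a Pareto-minimal point `u` of
the compact hull below `F(q, V)` belongs to `Γ_N(V)`. For the upsets, a point `x ≥ v` is then
`1/N`-close to `u ⊔ (x - 1/N) ∈ up(Γ_N(V))`. -/

open Set

section Domination

variable {K : ℕ} {U V : Set (Fin K → ℝ)}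

lemma eDom_le_of_forall_exists_le {ε : ℝ} (hε : 0 ≤ ε)
    (h : ∀ u ∈ U, ∃ v ∈ V, ∀ i, v i ≤ u i + ε) : eDom K U V ≤ ε :=
  csInf_le ⟨0, fun _ hδ => hδ.1⟩ ⟨hε, h⟩

lemma eDom_eq_zero_of_forall_exists_le (h : ∀ u ∈ U, ∃ v ∈ V, v ≤ u) : eDom K U V = 0 :=
  le_antisymm
    (eDom_le_of_forall_exists_le le_rfl fun u hu =>
      (h u hu).imp fun _ ⟨hv, hvu⟩ => ⟨hv, fun i => (add_zero (u i)).symm ▸ hvu i⟩)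
    (Real.sInf_nonneg fun _ hδ => hδ.1)

lemma eDom_empty_right (hU : U.Nonempty) : eDom K U ∅ = 0 := by
  obtain ⟨u, hu⟩ := hU
  have : {ε : ℝ | 0 ≤ ε ∧ ∀ u ∈ U, ∃ v ∈ (∅ : Set (Fin K → ℝ)), ∀ i, v i ≤ u i + ε} = ∅ :=
    eq_empty_of_forall_notMem fun ε hε => by simpa using hε.2 u hu
  rw [eDom, this, Real.sInf_empty]

lemma dF_empty_right : dF K U ∅ = 0 := by
  simp [dF, upset]

lemma upset_subset_upset (h : ∀ u ∈ U, ∃ v ∈ V, v ≤ u) : upset K U ⊆ upset K V :=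
  fun _ ⟨hx, u, hu, hux⟩ => ⟨hx, (h u hu).imp fun _ ⟨hv, hvu⟩ => ⟨hv, hvu.trans hux⟩⟩

lemma exists_mem_upset_dist_le {ε : ℝ} (hε : 0 ≤ ε)
    (h : ∀ v ∈ V, ∃ u ∈ U, u ∈ Icc 0 1 ∧ ∀ i, u i ≤ v i + ε) {x : Fin K → ℝ}
    (hx : x ∈ upset K V) : ∃ y ∈ upset K U, dist x y ≤ ε := by
  obtain ⟨⟨hx0, hx1⟩, v, hv, hvx⟩ := hx
  obtain ⟨u, hu, ⟨hu0, hu1⟩, huv⟩ := h v hv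
  refine ⟨u ⊔ (x - fun _ => ε), ⟨⟨hu0.trans le_sup_left, sup_le hu1 fun i => ?_⟩, u, hu,
    le_sup_left⟩, (dist_pi_le_iff hε).2 fun i => ?_⟩
  · simpa using (sub_le_self (x i) hε).trans (hx1 i)
  · rw [Real.dist_eq, abs_sub_le_iff]
    simp only [Pi.sup_apply, Pi.sub_apply]
    constructor
    · linarith [le_max_right (u i) (x i - ε)]
    · linarith [max_le (show u i ≤ x i + ε by linarith [huv i, hvx i])
        (show x i - ε ≤ x i + ε by linarith)]

lemma dF_le_of_forall_exists_le {ε : ℝ} (hε : 0 ≤ ε) (hUV : ∀ u ∈ U, ∃ v ∈ V, v ≤ u)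
    (hVU : ∀ v ∈ V, ∃ u ∈ U, u ∈ Icc 0 1 ∧ ∀ i, u i ≤ v i + ε) : dF K V U ≤ ε :=
  Metric.hausdorffDist_le_of_mem_dist hε (fun _ hx => exists_mem_upset_dist_le hε hVU hx)
    fun x hx => ⟨x, upset_subset_upset hUV hx, (dist_self x).trans_le hε⟩

end Domination

lemma IsCompact.exists_mem_pareto_le {K : ℕ} {S : Set (Fin K → ℝ)} (hS : IsCompact S)
    {x : Fin K → ℝ} (hx : x ∈ S) : ∃ u ∈ pareto K S, u ≤ x := by
  -- a minimiser of the coordinate sum below `x` is Pareto minimal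
  obtain ⟨u, ⟨huS, hux⟩, humin⟩ := (hS.inter_right isClosed_Iic).exists_isMinOn
    ⟨x, hx, le_rfl (a := x)⟩
    (continuous_finsetSum Finset.univ fun i _ => continuous_apply i).continuousOn
  refine ⟨u, ⟨huS, fun z hz hzu => ?_⟩, hux⟩
  by_contra hne
  obtain ⟨i, hi⟩ := Function.ne_iff.1 hne
  have hlt : ∑ i, z i < ∑ i, u i :=
    Finset.sum_lt_sum (fun j _ => hzu j) ⟨i, Finset.mem_univ i, (hzu i).lt_of_ne hi⟩
  exact lt_irrefl _ (hlt.trans_le (humin ⟨hz, hzu.trans hux⟩))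

section Frontier

variable {K : ℕ} {V : Set (Fin K → ℝ)}

lemma upperClosure_eq_of_memF (hV : memF K V) :
    (upperClosure V : Set (Fin K → ℝ)) = Ici 0 ∩ (· ⊓ 1) ⁻¹' upset K V := by
  ext x
  constructor
  · rintro ⟨y, hy, hyx⟩
    obtain ⟨hy0, hy1⟩ := hV.2.1 hy
    exact ⟨hy0.trans hyx, ⟨le_inf (hy0.trans hyx) zero_le_one, inf_le_right⟩, y, hy, le_inf hyx hy1⟩
  · rintro ⟨-, -, y, hy, hyx⟩
    exact ⟨y, hy, hyx.trans inf_le_left⟩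

lemma isClosed_upperClosure_of_memF (hV : memF K V) :
    IsClosed (upperClosure V : Set (Fin K → ℝ)) := by
  rw [upperClosure_eq_of_memF hV]
  exact isClosed_Ici.inter (hV.2.2.2.1.preimage
    (continuous_pi fun i => (continuous_apply i).min continuous_const))

lemma convex_upperClosure_of_memF (hV : memF K V) :
    Convex ℝ (upperClosure V : Set (Fin K → ℝ)) := by
  rintro x ⟨y, hy, hyx⟩ x' ⟨y', hy', hyx'⟩ a b ha hb hab
  have hy_mem : y ∈ upset K V := ⟨hV.2.1 hy, y, hy, le_rfl⟩
  have hy'_mem : y' ∈ upset K V := ⟨hV.2.1 hy', y', hy', le_rfl⟩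
  obtain ⟨-, z, hz, hzy⟩ := hV.2.2.2.2 hy_mem hy'_mem ha hb hab
  exact ⟨z, hz, hzy.trans (add_le_add (smul_le_smul_of_nonneg_left hyx ha)
    (smul_le_smul_of_nonneg_left hyx' hb))⟩

end Frontier

section Fparam

variable {K : ℕ} {V : Set (Fin K → ℝ)} {p : Fin K → ℝ}

/-- The shifts `t` admissible in the definition of `F(p, V)`, whose infimum is `t*`. -/
def feasibleShifts (K : ℕ) (p : Fin K → ℝ) (V : Set (Fin K → ℝ)) : Set ℝ :=
  {t | (∀ j, 0 ≤ t + p j ∧ t + p j ≤ 2) ∧ ∃ y ∈ V, ∀ j, y j ≤ t + p j}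

lemma isClosed_feasibleShifts (hV : memF K V) : IsClosed (feasibleShifts K p V) := by
  have : feasibleShifts K p V = (⋂ j, Icc (-p j) (2 - p j)) ∩
      (fun t j => t + p j) ⁻¹' (upperClosure V : Set (Fin K → ℝ)) := by
    ext t
    simp only [feasibleShifts, mem_inter_iff, mem_iInter, mem_Icc, mem_preimage, SetLike.mem_coe,
      mem_upperClosure, Pi.le_def]
    refine and_congr (forall_congr' fun j => ?_) Iff.rfl
    constructor <;> rintro ⟨h₁, h₂⟩ <;> constructor <;> linarith
  rw [this]
  exact (isClosed_iInter fun _ => isClosed_Icc).inter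
    ((isClosed_upperClosure_of_memF hV).preimage (continuous_pi fun j => by fun_prop))

lemma bddBelow_feasibleShifts [NeZero K] : BddBelow (feasibleShifts K p V) :=
  ⟨-p 0, fun t ht => by linarith [(ht.1 0).1]⟩

lemma one_mem_feasibleShifts (hV : memF K V) (hp : ∀ j, p j ∈ Icc 0 1) :
    (1 : ℝ) ∈ feasibleShifts K p V := by
  obtain ⟨v, hv⟩ := hV.1
  exact ⟨fun j => ⟨by linarith [(hp j).1], by linarith [(hp j).2]⟩, v, hv,
    fun j => (show v j ≤ 1 from (hV.2.1 hv).2 j).trans (le_add_of_nonneg_right (hp j).1)⟩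

lemma Fparam_le_of_mem_feasibleShifts [NeZero K] {t : ℝ} (ht : t ∈ feasibleShifts K p V)
    (i : Fin K) : Fparam K p V i ≤ t + p i :=
  add_le_add_left (csInf_le bddBelow_feasibleShifts ht) _

lemma Fparam_mem_upperClosure_inter_Ici [NeZero K] (hV : memF K V) (hp : ∀ j, p j ∈ Icc 0 1) :
    Fparam K p V ∈ (upperClosure V : Set (Fin K → ℝ)) ∩ Ici 0 := by
  obtain ⟨hbounds, y, hy, hyF⟩ : sInf (feasibleShifts K p V) ∈ feasibleShifts K p V :=
    (isClosed_feasibleShifts hV).csInf_mem ⟨1, one_mem_feasibleShifts hV hp⟩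
      bddBelow_feasibleShifts
  exact ⟨⟨y, hy, hyF⟩, fun j => (hbounds j).1⟩

end Fparam

section Grid

variable {N : ℕ} {x : ℝ}

lemma le_natCeil_mul_div (hN : 0 < N) : x ≤ ⌈N * x⌉₊ / N := by
  rw [le_div_iff₀ (by positivity), mul_comm]
  exact Nat.le_ceil _

lemma natCeil_mul_le (hx : x ≤ 1) : ⌈N * x⌉₊ ≤ N :=
  Nat.ceil_le.2 (mul_le_of_le_one_right (Nat.cast_nonneg N) hx)

lemma natCeil_mul_div_le_one (hx : x ≤ 1) : (⌈N * x⌉₊ : ℝ) / N ≤ 1 :=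
  div_le_one_of_le₀ (by exact_mod_cast natCeil_mul_le hx) (Nat.cast_nonneg N)

lemma natCeil_mul_div_lt (hN : 0 < N) (hx : 0 ≤ x) : (⌈N * x⌉₊ : ℝ) / N < x + 1 / N := by
  have hN' : (0 : ℝ) < N := by exact_mod_cast hN
  rw [div_lt_iff₀ hN', add_mul, one_div_mul_cancel hN'.ne', mul_comm]
  exact Nat.ceil_lt_add_one (by positivity)

end Grid

section Gamma

variable {K N : ℕ} {V : Set (Fin K → ℝ)}

lemma exists_mem_paramSetN_Fparam_le [NeZero K] (hN : 0 < N) (hV : memF K V)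
    {v : Fin K → ℝ} (hv : v ∈ V) : ∃ q ∈ paramSetN K N, ∀ i, Fparam K q V i ≤ ⌈N * v i⌉₊ / N := by
  set r : Fin K → ℕ := fun i => ⌈N * v i⌉₊
  obtain ⟨i₀, hi₀⟩ := Finite.exists_min r
  have hrN : ∀ i, r i ≤ N := fun i => natCeil_mul_le ((hV.2.1 hv).2 i)
  set q : Fin K → ℝ := fun i => ((r i - r i₀ : ℕ) : ℝ) / N
  -- the shift `r i₀ / N` moves `q` onto the grid point `r / N`, which dominates `v`
  have hshift : ∀ i, (r i₀ : ℝ) / N + q i = r i / N := fun i => by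
    rw [show q i = ((r i - r i₀ : ℕ) : ℝ) / N from rfl, Nat.cast_sub (hi₀ i), ← add_div,
      add_sub_cancel]
  have hgap : ∀ i, r i - r i₀ ≤ N := fun i => (Nat.sub_le _ _).trans (hrN i)
  have hq : q ∈ paramSetN K N :=
    ⟨⟨fun i => ⟨by positivity, div_le_one_of_le₀ (by exact_mod_cast hgap i) (Nat.cast_nonneg _)⟩,
      i₀, by simp [q]⟩, fun i => ⟨_, hgap i, rfl⟩⟩
  have hfeas : (r i₀ : ℝ) / N ∈ feasibleShifts K q V := by
    refine ⟨fun j => ?_, v, hv, fun j => ?_⟩ <;> rw [hshift]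
    · exact ⟨by positivity, (natCeil_mul_div_le_one ((hV.2.1 hv).2 j)).trans one_le_two⟩
    · exact le_natCeil_mul_div hN
  exact ⟨q, hq, fun i => (Fparam_le_of_mem_feasibleShifts hfeas i).trans_eq (hshift i)⟩

lemma paramSetN_finite (K N : ℕ) : (paramSetN K N).Finite := by
  refine (Set.Finite.pi fun _ => (finite_Iic N).image fun j : ℕ => (j : ℝ) / N).subset ?_
  intro p hp i _
  obtain ⟨j, hj, hpj⟩ := hp.2 i
  exact ⟨j, hj, hpj.symm⟩

lemma isCompact_convexHull_Fparam_image :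
    IsCompact (convexHull ℝ ((fun p => Fparam K p V) '' paramSetN K N)) :=
  ((paramSetN_finite K N).image _).isCompact_convexHull ℝ

lemma gammaN_eq_pareto_convexHull :
    gammaN K N V = pareto K (convexHull ℝ ((fun p => Fparam K p V) '' paramSetN K N)) := by
  rw [gammaN, isCompact_convexHull_Fparam_image.isClosed.closure_eq]

lemma gammaN_subset_upperClosure_inter_Ici [NeZero K] (hV : memF K V) :
    gammaN K N V ⊆ (upperClosure V : Set (Fin K → ℝ)) ∩ Ici 0 := by
  rw [gammaN_eq_pareto_convexHull]
  refine (sep_subset _ _).trans (convexHull_min ?_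
    ((convex_upperClosure_of_memF hV).inter (convex_Ici 0)))
  rintro _ ⟨p, hp, rfl⟩
  exact Fparam_mem_upperClosure_inter_Ici hV hp.1.1

lemma exists_mem_gammaN_le_natCeil [NeZero K] (hN : 0 < N) (hV : memF K V)
    {v : Fin K → ℝ} (hv : v ∈ V) : ∃ u ∈ gammaN K N V, ∀ i, u i ≤ ⌈N * v i⌉₊ / N := by
  obtain ⟨q, hq, hqv⟩ := exists_mem_paramSetN_Fparam_le hN hV hv
  rw [gammaN_eq_pareto_convexHull]
  obtain ⟨u, hu, huq⟩ := isCompact_convexHull_Fparam_image.exists_mem_pareto_le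
    (subset_convexHull ℝ _ (mem_image_of_mem _ hq))
  exact ⟨u, hu, fun i => (huq i).trans (hqv i)⟩

end Gamma

lemma gammaN_zero_dim (N : ℕ) (V : Set (Fin 0 → ℝ)) : gammaN 0 N V = ∅ := by
  simp [gammaN, paramSetN, paramSet, pareto]

/-- for every `V ∈ 𝓕` and `N ≥ 1`: `e(Γ_N(V), V) = 0`,
`e(V, Γ_N(V)) ≤ 1/N`, and hence `d(V, Γ_N(V)) ≤ 1/N`. -/
theorem gammaN_approx {K : ℕ} (N : ℕ) (hN : 0 < N)
    (V : Set (Fin K → ℝ)) (hV : memF K V) :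
    eDom K (gammaN K N V) V = 0 ∧
      eDom K V (gammaN K N V) ≤ 1 / N ∧
      dF K V (gammaN K N V) ≤ 1 / N := by
  have hε : (0 : ℝ) ≤ 1 / N := by positivity
  obtain _ | K := K
  · -- no vector in `ℝ^0` has a zero coordinate, so `Γ_N(V) = ∅` and the junk values
    -- `sInf ∅ = 0`, `hausdorffDist s ∅ = 0` give the claims
    rw [gammaN_zero_dim]
    exact ⟨eDom_eq_zero_of_forall_exists_le fun _ h => h.elim,
      (eDom_empty_right hV.1).trans_le hε, dF_empty_right.trans_le hε⟩
  have hΓV : ∀ u ∈ gammaN (K + 1) N V, ∃ v ∈ V, v ≤ u := fun u hu =>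
    (gammaN_subset_upperClosure_inter_Ici hV hu).1
  have hVΓ : ∀ v ∈ V, ∃ u ∈ gammaN (K + 1) N V, u ∈ Icc 0 1 ∧ ∀ i, u i ≤ v i + 1 / N := by
    intro v hv
    obtain ⟨u, hu, huv⟩ := exists_mem_gammaN_le_natCeil hN hV hv
    exact ⟨u, hu, ⟨(gammaN_subset_upperClosure_inter_Ici hV hu).2,
      fun i => (huv i).trans (natCeil_mul_div_le_one ((hV.2.1 hv).2 i))⟩,
      fun i => (huv i).trans (natCeil_mul_div_lt hN ((hV.2.1 hv).1 i)).le⟩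
  exact ⟨eDom_eq_zero_of_forall_exists_le hΓV,
    eDom_le_of_forall_exists_le hε fun v hv => (hVΓ v hv).imp fun _ h => ⟨h.1, h.2.2⟩,
    dF_le_of_forall_exists_le hε hΓV hVΓ⟩
end
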